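/- In the polynomial ring Z[t_1,…,t_r], the determinant of the r×r matrix M whose (j,a) entry (1 ≤ j,a ≤ r) is the (a-1)-st elementary symmetric polynomial in the variables t_1,…,t_r omitting t_j, equals up to sign the Vandermonde product ∏_{i<j}(t_i − t_j). In particular this determinant is a nonzero polynomial. -/
import Mathlib

open MvPolynomial Finset

section Aux

variable (r : ℕ)

private noncomputable def fOmit (j : Fin r) (a : ℕ) : MvPolynomial (Fin r) ℤ :=
  ∑ s ∈ Finset.powersetCard a ((Finset.univ : Finset (Fin r)).erase j), ∏ i ∈ s, X i

private lemma esymm_split (j : Fin r) (a : ℕ) :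
    esymm (Fin r) ℤ (a + 1) = fOmit r j (a + 1) + X j * fOmit r j a := by
  have huniv : (Finset.univ : Finset (Fin r)) = insert j (Finset.univ.erase j) :=
    (Finset.insert_erase (mem_univ j)).symm
  rw [esymm, huniv, Finset.powersetCard_succ_insert (notMem_erase _ _)]
  rw [Finset.sum_union]
  · congr 1
    rw [Finset.sum_image, fOmit, Finset.mul_sum]
    · apply Finset.sum_congr rfl
      intro s hs
      have hj : j ∉ s := fun h =>
        (Finset.mem_erase.mp ((Finset.mem_powersetCard.mp hs).1 h)).1 rfl
      rw [Finset.prod_insert hj]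
    · intro x hx y hy hxy
      have hjx : j ∉ x := fun h =>
        (Finset.mem_erase.mp ((Finset.mem_powersetCard.mp hx).1 h)).1 rfl
      have hjy : j ∉ y := fun h =>
        (Finset.mem_erase.mp ((Finset.mem_powersetCard.mp hy).1 h)).1 rfl
      have := congrArg (fun s => Finset.erase s j) hxy
      simpa [Finset.erase_insert hjx, Finset.erase_insert hjy] using this
  · rw [Finset.disjoint_left]
    intro s hs hs'
    have hj : j ∉ s := fun h =>
      (Finset.mem_erase.mp ((Finset.mem_powersetCard.mp hs).1 h)).1 rfl
    obtain ⟨t, _, rfl⟩ := Finset.mem_image.mp hs'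
    exact hj (Finset.mem_insert_self _ _)

private lemma fOmit_eq (j : Fin r) : ∀ a : ℕ,
    fOmit r j a = ∑ k ∈ Finset.range (a + 1),
      (-1 : MvPolynomial (Fin r) ℤ) ^ k * X j ^ k * esymm (Fin r) ℤ (a - k) := by
  intro a
  induction a with
  | zero => simp [fOmit, esymm_zero]
  | succ a ih =>
    have h := esymm_split r j a
    have key : fOmit r j (a + 1) = esymm (Fin r) ℤ (a + 1) - X j * fOmit r j a := by
      rw [h]; ring
    rw [key, ih,
      Finset.sum_range_succ' (fun k => (-1 : MvPolynomial (Fin r) ℤ) ^ k * X j ^ k *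
        esymm (Fin r) ℤ (a + 1 - k)) (a + 1)]
    have hcg : ∀ k ∈ Finset.range (a + 1),
        (-1 : MvPolynomial (Fin r) ℤ) ^ (k + 1) * X j ^ (k + 1) *
          esymm (Fin r) ℤ (a + 1 - (k + 1)) =
        -(X j * ((-1 : MvPolynomial (Fin r) ℤ) ^ k * X j ^ k * esymm (Fin r) ℤ (a - k))) := by
      intro k _
      have h2 : a + 1 - (k + 1) = a - k := by omega
      rw [h2]; ring
    rw [Finset.sum_congr rfl hcg, Finset.sum_neg_distrib, ← Finset.mul_sum]
    simp only [pow_zero, one_mul, Nat.sub_zero]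
    ring

end Aux

/-- In `ℤ[t₁,…,t_r]`, the determinant of the `r × r` matrix whose
`(j,a)` entry is the elementary symmetric polynomial of degree `a-1` in the
variables `t₁,…,t_r` omitting `t_j` equals, up to sign, the Vandermonde product
`∏_{i<j} (t_i − t_j)`; in particular it is nonzero (for `r ≥ 1`). -/
theorem det_esymm_omit_matrix_eq_vandermonde
    (r : ℕ) (hr : 1 ≤ r)
    (M : Matrix (Fin r) (Fin r) (MvPolynomial (Fin r) ℤ))
    (hM : ∀ j a : Fin r,
      M j a = ∑ s ∈ Finset.powersetCard (a : ℕ) ((Finset.univ : Finset (Fin r)).erase j),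
        ∏ i ∈ s, X i) :
    (M.det = ∏ p ∈ Finset.univ.filter (fun p : Fin r × Fin r => p.1 < p.2), (X p.1 - X p.2) ∨
      M.det = -∏ p ∈ Finset.univ.filter (fun p : Fin r × Fin r => p.1 < p.2), (X p.1 - X p.2)) ∧
    M.det ≠ 0 := by
  classical
  set P : MvPolynomial (Fin r) ℤ :=
    ∏ p ∈ Finset.univ.filter (fun p : Fin r × Fin r => p.1 < p.2), (X p.1 - X p.2) with hP
  set B : Matrix (Fin r) (Fin r) (MvPolynomial (Fin r) ℤ) := fun k a =>
    if (k : ℕ) ≤ (a : ℕ) then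
      (-1 : MvPolynomial (Fin r) ℤ) ^ (k : ℕ) * esymm (Fin r) ℤ ((a : ℕ) - (k : ℕ)) else 0
    with hB
  -- factorization M = V * B
  have hfact : M = Matrix.vandermonde (fun j : Fin r => (X j : MvPolynomial (Fin r) ℤ)) * B := by
    refine Matrix.ext fun j a => ?_
    rw [Matrix.mul_apply, hM]
    have hterm : ∀ k : Fin r,
        Matrix.vandermonde (fun j : Fin r => (X j : MvPolynomial (Fin r) ℤ)) j k * B k a =
        (fun k : ℕ => if k ≤ (a : ℕ) then
          (-1 : MvPolynomial (Fin r) ℤ) ^ k * X j ^ k * esymm (Fin r) ℤ ((a : ℕ) - k)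
          else 0) (k : ℕ) := by
      intro k
      simp only [Matrix.vandermonde_apply, hB]
      split <;> ring
    have h1 : ∑ k : Fin r,
        Matrix.vandermonde (fun j : Fin r => (X j : MvPolynomial (Fin r) ℤ)) j k * B k a =
        ∑ k ∈ Finset.range r, (fun k : ℕ => if k ≤ (a : ℕ) then
          (-1 : MvPolynomial (Fin r) ℤ) ^ k * X j ^ k * esymm (Fin r) ℤ ((a : ℕ) - k)
          else 0) k := by
      rw [← Fin.sum_univ_eq_sum_range]
      exact Finset.sum_congr rfl fun k _ => hterm k
    rw [h1]
    rw [← Finset.sum_subset (Finset.range_subset_range.mpr (by omega : (a : ℕ) + 1 ≤ r))]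
    · have h2 : ∀ x ∈ Finset.range ((a : ℕ) + 1),
          (if x ≤ (a : ℕ) then
            (-1 : MvPolynomial (Fin r) ℤ) ^ x * X j ^ x * esymm (Fin r) ℤ ((a : ℕ) - x)
            else 0) =
          (-1 : MvPolynomial (Fin r) ℤ) ^ x * X j ^ x * esymm (Fin r) ℤ ((a : ℕ) - x) :=
        fun x hx => if_pos (Nat.lt_succ_iff.mp (Finset.mem_range.mp hx))
      rw [Finset.sum_congr rfl h2, ← fOmit_eq, fOmit]
    · intro k _ hk
      rw [if_neg (fun h => hk (Finset.mem_range.mpr (by omega)))]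
  -- det B
  have hdetB : B.det = ∏ k : Fin r, (-1 : MvPolynomial (Fin r) ℤ) ^ (k : ℕ) := by
    rw [Matrix.det_of_upperTriangular]
    · apply Finset.prod_congr rfl
      intro k _
      simp [hB, esymm_zero]
    · intro i j hij
      simp only [hB]
      have hn : ¬ ((i : ℕ) ≤ (j : ℕ)) := fun h => not_le.mpr hij (Fin.le_def.mpr h)
      rw [if_neg hn]
  -- det Vandermonde, rewritten with factors (X i - X j)
  have hdetV : (Matrix.vandermonde (fun j : Fin r => (X j : MvPolynomial (Fin r) ℤ))).det =
      (∏ i : Fin r, (-1 : MvPolynomial (Fin r) ℤ) ^ (Finset.Ioi i).card) *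
        ∏ i : Fin r, ∏ j ∈ Finset.Ioi i, (X i - X j) := by
    rw [Matrix.det_vandermonde, ← Finset.prod_mul_distrib]
    apply Finset.prod_congr rfl
    intro i _
    have h1 : ∀ j ∈ Finset.Ioi i, (X j - X i : MvPolynomial (Fin r) ℤ) = -1 * (X i - X j) := by
      intro j _; ring
    rw [Finset.prod_congr rfl h1, Finset.prod_mul_distrib, Finset.prod_const]
  -- the double product equals P
  have hPP : (∏ i : Fin r, ∏ j ∈ Finset.Ioi i, (X i - X j : MvPolynomial (Fin r) ℤ)) = P := by
    rw [hP,
      show (∏ i : Fin r, ∏ j ∈ Finset.Ioi i, (X i - X j : MvPolynomial (Fin r) ℤ)) =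
        ∏ x ∈ (Finset.univ : Finset (Fin r)).sigma (fun i => Finset.Ioi i),
          (X x.1 - X x.2 : MvPolynomial (Fin r) ℤ) from
        (Finset.prod_sigma (Finset.univ : Finset (Fin r)) (fun i => Finset.Ioi i)
          (fun x => (X x.1 - X x.2 : MvPolynomial (Fin r) ℤ))).symm]
    apply Finset.prod_bij (fun (x : Σ _ : Fin r, Fin r) _ => (x.1, x.2))
    · rintro ⟨i, j⟩ hx
      simp only [Finset.mem_sigma, Finset.mem_Ioi] at hx
      simp [hx.2]
    · rintro ⟨i, j⟩ - ⟨i', j'⟩ - h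
      simp only [Prod.mk.injEq] at h
      obtain ⟨rfl, rfl⟩ := h
      rfl
    · rintro ⟨i, j⟩ hp
      simp only [Finset.mem_filter, Finset.mem_univ, true_and] at hp
      exact ⟨⟨i, j⟩, by simp [Finset.mem_sigma, hp], rfl⟩
    · intro x _; rfl
  -- assemble
  have hdet : M.det = ((∏ k : Fin r, (-1 : MvPolynomial (Fin r) ℤ) ^ (k : ℕ)) *
      ∏ i : Fin r, (-1 : MvPolynomial (Fin r) ℤ) ^ (Finset.Ioi i).card) * P := by
    rw [hfact, Matrix.det_mul, hdetB, hdetV, hPP]; ring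
  have hsign : ((∏ k : Fin r, (-1 : MvPolynomial (Fin r) ℤ) ^ (k : ℕ)) *
      ∏ i : Fin r, (-1 : MvPolynomial (Fin r) ℤ) ^ (Finset.Ioi i).card) = 1 ∨
      ((∏ k : Fin r, (-1 : MvPolynomial (Fin r) ℤ) ^ (k : ℕ)) *
      ∏ i : Fin r, (-1 : MvPolynomial (Fin r) ℤ) ^ (Finset.Ioi i).card) = -1 := by
    rw [Finset.prod_pow_eq_pow_sum, Finset.prod_pow_eq_pow_sum, ← pow_add]
    exact neg_one_pow_eq_or _ _
  have hPne : P ≠ 0 := by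
    rw [hP]
    apply Finset.prod_ne_zero_iff.mpr
    rintro ⟨i, j⟩ hp
    simp only [Finset.mem_filter, Finset.mem_univ, true_and] at hp
    exact sub_ne_zero.mpr fun h => absurd (X_injective h) (ne_of_lt hp)
  rcases hsign with h1 | h1 <;> rw [h1] at hdet
  · exact ⟨Or.inl (by rw [hdet, one_mul]), by rw [hdet, one_mul]; exact hPne⟩
  · refine ⟨Or.inr (by rw [hdet]; ring), ?_⟩
    rw [hdet]
    simpa using hPne
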